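/- arXiv:cs/0502032 — 2 statements merged into one kernel-verified Lean document; each statement's English description precedes it below -/
import Mathlib

section
/- In any collection of n finite sets each of cardinality at most s, if n > (p-1)^(s+1) · s!, then the collection contains a sunflower with p petals, i.e., p sets such that the pairwise intersection of any two of them equals the intersection of all of them. -/
open Finset

private lemma trivial_sf {α : Type*} [DecidableEq α] {P : Finset (Finset α)} (hP : P.card ≤ 1) :
    ∀ A ∈ P, ∀ B ∈ P, A ≠ B →
      ((A ∩ B : Finset α) : Set α) = ⋂ C ∈ P, (C : Set α) := by
  intro A hA B hB hAB
  exact absurd (Finset.card_le_one.mp hP A hA B hB) hAB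

private lemma disj_sf {α : Type*} [DecidableEq α] {P : Finset (Finset α)} (hp : 2 ≤ P.card)
    (hdisj : (P : Set (Finset α)).PairwiseDisjoint id) :
    ∀ A ∈ P, ∀ B ∈ P, A ≠ B →
      ((A ∩ B : Finset α) : Set α) = ⋂ C ∈ P, (C : Set α) := by
  obtain ⟨C1, hC1, C2, hC2, hne⟩ := Finset.one_lt_card.mp hp
  have hIempty : ⋂ C ∈ P, (C : Set α) = (∅ : Set α) := by
    apply Set.eq_empty_iff_forall_notMem.mpr
    intro x hx
    simp only [Set.mem_iInter, Finset.mem_coe] at hx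
    exact Finset.disjoint_left.mp (hdisj hC1 hC2 hne) (hx C1 hC1) (hx C2 hC2)
  intro A hA B hB hAB
  have h1 : A ∩ B = ∅ := Finset.disjoint_iff_inter_eq_empty.mp (hdisj hA hB hAB)
  rw [h1, hIempty]; simp

private lemma sf_aux {α : Type*} [DecidableEq α] (s : ℕ) :
    ∀ (F : Finset (Finset α)) (p : ℕ),
      (∀ A ∈ F, A.card ≤ s) → (p - 1) ^ (s + 1) * Nat.factorial s < F.card →
      ∃ P ⊆ F, P.card = p ∧
        ∀ A ∈ P, ∀ B ∈ P, A ≠ B →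
          ((A ∩ B : Finset α) : Set α) = ⋂ C ∈ P, (C : Set α) := by
  induction s with
  | zero =>
    intro F p hsize hn
    have hp : p ≤ 1 := by
      by_contra h
      have hsub : F ⊆ {∅} := fun A hA => by
        simp [Finset.card_eq_zero.mp (Nat.le_zero.mp (hsize A hA))]
      have hc : F.card ≤ 1 := (Finset.card_le_card hsub).trans (by simp)
      simp [Nat.factorial] at hn
      omega
    have hF : p ≤ F.card := hp.trans (by omega)
    obtain ⟨P, hPF, hPc⟩ := Finset.exists_subset_card_eq hF
    exact ⟨P, hPF, hPc, trivial_sf (hPc ▸ hp)⟩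
  | succ s ih =>
    intro F p hsize hn
    by_cases hp1 : p ≤ 1
    · have hF : p ≤ F.card := hp1.trans (by omega)
      obtain ⟨P, hPF, hPc⟩ := Finset.exists_subset_card_eq hF
      exact ⟨P, hPF, hPc, trivial_sf (hPc ▸ hp1)⟩
    push_neg at hp1
    classical
    set S := F.powerset.filter (fun (D : Finset (Finset α)) => (D : Set (Finset α)).PairwiseDisjoint id) with hS
    have hSne : S.Nonempty := ⟨∅, by simp [hS]⟩
    obtain ⟨D, hDS, hDmax⟩ := Finset.exists_max_image S (fun D => D.card) hSne
    simp only [hS, Finset.mem_filter, Finset.mem_powerset] at hDS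
    obtain ⟨hDF, hDdisj⟩ := hDS
    by_cases hDp : p ≤ D.card
    · obtain ⟨P, hPD, hPc⟩ := Finset.exists_subset_card_eq hDp
      exact ⟨P, hPD.trans hDF, hPc,
        disj_sf (by omega) (hDdisj.subset (Finset.coe_subset.mpr hPD))⟩
    push_neg at hDp
    -- maximality
    have hmax : ∀ A ∈ F, (∀ B ∈ D, Disjoint A B) → A ∈ D := by
      intro A hAF hdis
      by_contra hAD
      have hins : insert A D ∈ S := by
        simp only [hS, Finset.mem_filter, Finset.mem_powerset]
        refine ⟨Finset.insert_subset hAF hDF, ?_⟩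
        rw [Finset.coe_insert]
        exact Set.PairwiseDisjoint.insert hDdisj (fun B hB _ => hdis B hB)
      have := hDmax _ hins
      rw [Finset.card_insert_of_notMem hAD] at this
      omega
    set Y := D.biUnion id with hY
    have hmeet : ∀ A ∈ F, A ≠ ∅ → (A ∩ Y).Nonempty := by
      intro A hAF hAne
      by_contra h
      rw [Finset.not_nonempty_iff_eq_empty, ← Finset.disjoint_iff_inter_eq_empty] at h
      have hdis : ∀ B ∈ D, Disjoint A B := fun B hB =>
        h.mono_right (Finset.subset_biUnion_of_mem id hB)
      have hAD := hmax A hAF hdis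
      have hAY : A ⊆ Y := Finset.subset_biUnion_of_mem id hAD
      have : Disjoint A A := h.mono_right hAY
      exact hAne (by simpa using disjoint_self.mp this)
    set B' := (p - 1) ^ (s + 1) * Nat.factorial s with hB'
    have hB'pos : 1 ≤ B' := by
      have h1 : 1 ≤ (p - 1) ^ (s + 1) := Nat.one_le_pow _ _ (by omega)
      have h2 : 1 ≤ Nat.factorial s := Nat.one_le_iff_ne_zero.mpr (Nat.factorial_ne_zero s)
      calc 1 = 1 * 1 := by ring
        _ ≤ B' := Nat.mul_le_mul h1 h2
    have hbnd : (p - 1) ^ (s + 1 + 1) * Nat.factorial (s + 1) = (p - 1) * (s + 1) * B' := by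
      rw [hB', pow_succ, Nat.factorial_succ]; ring
    -- pigeonhole: some y in many sets
    have hkey : ∃ y, B' < (F.filter (fun A => y ∈ A)).card := by
      by_contra hcon
      push_neg at hcon
      have hFsub : F.filter (fun A => A ≠ ∅) ⊆ Y.biUnion (fun y => F.filter (fun A => y ∈ A)) := by
        intro A hA
        simp only [Finset.mem_filter] at hA
        obtain ⟨x, hx⟩ := hmeet A hA.1 hA.2
        rw [Finset.mem_inter] at hx
        exact Finset.mem_biUnion.mpr ⟨x, hx.2, Finset.mem_filter.mpr ⟨hA.1, hx.1⟩⟩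
      have hF'card : (F.filter (fun A => A ≠ ∅)).card ≤ Y.card * B' := by
        calc (F.filter (fun A => A ≠ ∅)).card
            ≤ (Y.biUnion (fun y => F.filter (fun A => y ∈ A))).card := Finset.card_le_card hFsub
          _ ≤ ∑ y ∈ Y, (F.filter (fun A => y ∈ A)).card := Finset.card_biUnion_le
          _ ≤ ∑ _y ∈ Y, B' := Finset.sum_le_sum (fun y _ => hcon y)
          _ = Y.card * B' := by simp [Finset.sum_const, mul_comm]
      by_cases hemp : (∅ : Finset α) ∈ F
      · -- ∅ ∈ F, so ∅ ∈ D and Y has at most (p-2)(s+1) elements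
        have hED : (∅ : Finset α) ∈ D := hmax ∅ hemp (fun B _ => Finset.disjoint_empty_left B)
        have hYsub : Y ⊆ (D.erase ∅).biUnion id := by
          intro x hx
          rw [hY, Finset.mem_biUnion] at hx
          obtain ⟨A, hA, hxA⟩ := hx
          refine Finset.mem_biUnion.mpr ⟨A, Finset.mem_erase.mpr ⟨?_, hA⟩, hxA⟩
          rintro rfl; exact absurd hxA (Finset.notMem_empty x)
        have hYcard : Y.card ≤ (p - 2) * (s + 1) := by
          calc Y.card ≤ ((D.erase ∅).biUnion id).card := Finset.card_le_card hYsub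
            _ ≤ ∑ A ∈ D.erase ∅, A.card := Finset.card_biUnion_le
            _ ≤ ∑ _A ∈ D.erase ∅, (s + 1) :=
                Finset.sum_le_sum (fun A hA => hsize A (hDF (Finset.mem_of_mem_erase hA)))
            _ = (D.erase ∅).card * (s + 1) := by simp [Finset.sum_const, mul_comm]
            _ ≤ (p - 2) * (s + 1) := by
                apply Nat.mul_le_mul_right
                rw [Finset.card_erase_of_mem hED]; omega
        have hsplit : F.card ≤ (F.filter (fun A => A ≠ ∅)).card + 1 := by
          have : F ⊆ insert ∅ (F.filter (fun A => A ≠ ∅)) := by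
            intro A hA
            by_cases hA0 : A = ∅
            · simp [hA0]
            · exact Finset.mem_insert_of_mem (Finset.mem_filter.mpr ⟨hA, hA0⟩)
          calc F.card ≤ (insert ∅ (F.filter (fun A => A ≠ ∅))).card := Finset.card_le_card this
            _ ≤ (F.filter (fun A => A ≠ ∅)).card + 1 := Finset.card_insert_le _ _
        have h1 : F.card ≤ (p - 2) * (s + 1) * B' + 1 := by
          have := hF'card.trans (Nat.mul_le_mul_right B' hYcard)
          omega
        have h2 : (p - 2) * (s + 1) * B' + (s + 1) * B' = (p - 1) * (s + 1) * B' := by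
          have : (p - 2) * ((s + 1) * B') + 1 * ((s + 1) * B') = (p - 2 + 1) * ((s + 1) * B') := by
            ring
          have hp2 : p - 2 + 1 = p - 1 := by omega
          calc (p - 2) * (s + 1) * B' + (s + 1) * B'
              = (p - 2 + 1) * ((s + 1) * B') := by ring
            _ = (p - 1) * (s + 1) * B' := by rw [hp2]; ring
        have h3 : 1 ≤ (s + 1) * B' := le_trans hB'pos (Nat.le_mul_of_pos_left _ (by omega))
        rw [hbnd] at hn
        omega
      · -- ∅ ∉ F : every set meets Y
        have hYcard : Y.card ≤ (p - 1) * (s + 1) := by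
          calc Y.card ≤ ∑ A ∈ D, A.card := Finset.card_biUnion_le
            _ ≤ ∑ _A ∈ D, (s + 1) := Finset.sum_le_sum (fun A hA => hsize A (hDF hA))
            _ = D.card * (s + 1) := by simp [Finset.sum_const, mul_comm]
            _ ≤ (p - 1) * (s + 1) := Nat.mul_le_mul_right _ (by omega)
        have hfe : F.filter (fun A => A ≠ ∅) = F := by
          apply Finset.filter_true_of_mem
          intro A hA hA0
          exact hemp (hA0 ▸ hA)
        rw [hfe] at hF'card
        have h1 : F.card ≤ (p - 1) * (s + 1) * B' :=
          hF'card.trans (Nat.mul_le_mul_right B' hYcard)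
        rw [hbnd] at hn
        omega
    obtain ⟨y, hy⟩ := hkey
    set Fy := F.filter (fun A => y ∈ A) with hFy
    have hyA : ∀ A ∈ Fy, y ∈ A := fun A hA => (Finset.mem_filter.mp hA).2
    set G := Fy.image (fun A => A.erase y) with hG
    have hGcard : G.card = Fy.card := by
      apply Finset.card_image_of_injOn
      intro A hA A' hA' h
      have h' : A.erase y = A'.erase y := h
      rw [← Finset.insert_erase (hyA A (Finset.mem_coe.mp hA)), h',
        Finset.insert_erase (hyA A' (Finset.mem_coe.mp hA'))]
    have hGsize : ∀ B ∈ G, B.card ≤ s := by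
      intro B hB
      rw [hG, Finset.mem_image] at hB
      obtain ⟨A, hA, rfl⟩ := hB
      rw [Finset.card_erase_of_mem (hyA A hA)]
      have := hsize A (Finset.mem_filter.mp hA).1
      omega
    have hGbig : (p - 1) ^ (s + 1) * Nat.factorial s < G.card := by rw [hGcard]; exact hy
    obtain ⟨P', hP'G, hP'c, sf'⟩ := ih G p hGsize hGbig
    have hyG : ∀ B ∈ P', y ∉ B := by
      intro B hB
      have := hP'G hB
      rw [hG, Finset.mem_image] at this
      obtain ⟨A, _, rfl⟩ := this
      exact Finset.notMem_erase y A
    refine ⟨P'.image (fun B => insert y B), ?_, ?_, ?_⟩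
    · intro C hC
      rw [Finset.mem_image] at hC
      obtain ⟨B, hB, rfl⟩ := hC
      have := hP'G hB
      rw [hG, Finset.mem_image] at this
      obtain ⟨A, hA, rfl⟩ := this
      rw [Finset.insert_erase (hyA A hA)]
      exact (Finset.mem_filter.mp hA).1
    · rw [← hP'c]
      apply Finset.card_image_of_injOn
      intro B hB B' hB' h
      have h' : insert y B = insert y B' := h
      rw [← Finset.erase_insert (hyG B (Finset.mem_coe.mp hB)), h',
        Finset.erase_insert (hyG B' (Finset.mem_coe.mp hB'))]
    · intro A1 hA1 A2 hA2 hne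
      rw [Finset.mem_image] at hA1 hA2
      obtain ⟨B1, hB1, rfl⟩ := hA1
      obtain ⟨B2, hB2, rfl⟩ := hA2
      have hB12 : B1 ≠ B2 := fun h => hne (by rw [h])
      have hIH := sf' B1 hB1 B2 hB2 hB12
      ext x
      have hx := Set.ext_iff.mp hIH x
      simp only [Finset.coe_inter, Set.mem_inter_iff, Finset.mem_coe, Set.mem_iInter] at hx
      simp only [Finset.coe_inter, Set.mem_inter_iff, Finset.mem_coe, Set.mem_iInter,
        Finset.mem_insert, Finset.mem_image, forall_exists_index, and_imp]
      constructor
      · rintro ⟨h1, h2⟩ C B hB rfl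
        rcases h1 with rfl | h1
        · exact Finset.mem_insert_self x B
        rcases h2 with rfl | h2
        · exact Finset.mem_insert_self x B
        exact Finset.mem_insert_of_mem (hx.mp ⟨h1, h2⟩ B hB)
      · intro h
        by_cases hxy : x = y
        · exact ⟨Or.inl hxy, Or.inl hxy⟩
        have hall : ∀ B ∈ P', x ∈ B := by
          intro B hB
          have := h (insert y B) B hB rfl
          rw [Finset.mem_insert] at this
          rcases this with rfl | hxB
          · exact absurd rfl hxy
          · exact hxB
        have := hx.mpr hall
        exact ⟨Or.inr this.1, Or.inr this.2⟩

/-- Erdős–Rado sunflower lemma: any collection of `n` finite sets, each of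
cardinality at most `s`, with `n > (p-1)^(s+1) * s!`, contains a sunflower
with `p` petals (the intersection of any two petals equals the intersection
of all petals). -/
theorem sunflower_lemma {α : Type*} [DecidableEq α] (F : Finset (Finset α)) (n s p : ℕ)
    (hcard : F.card = n) (hsize : ∀ A ∈ F, A.card ≤ s)
    (hn : n > (p - 1) ^ (s + 1) * Nat.factorial s) :
    ∃ P ⊆ F, P.card = p ∧
      ∀ A ∈ P, ∀ B ∈ P, A ≠ B →
        ((A ∩ B : Finset α) : Set α) = ⋂ C ∈ P, (C : Set α) := by
  subst hcard
  exact sf_aux s F p hsize hn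
end

section
/- Let A = {a₁,...,aₙ} be chosen uniformly from U₁ × ⋯ × Uₙ where each |Uᵢ| = u/n, and let f be a deterministic function with E_A[|f(A)|] ≤ 2S (bit-length). Define A_i^p = {a ∈ Uᵢ : ∃ A' ∈ U₁×⋯×Uₙ with a'_i = a and f(A') = f(A)}. Then E_{i,A}[log₂|A_i^p|] ≥ log₂(u/n) - O(S/n + 1), where i is uniform in [n]. -/
/-!
Describe `A` by the codeword `f A` followed by the index of `A` in its fiber `f⁻¹(f A)`. Weighting
a codeword `v` by `2^-(2|v|+1)` makes the weights of all binary strings sum to at most `1`, so by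
Gibbs' inequality the expected description length, `E[2|f A| + 1 + log₂ |f⁻¹(f A)|]`, is at least
`log₂ mⁿ = n log₂ m`. The fiber of `A` lies in the product of the plausible sets `Aᵢᵖ`, so
`log₂ |f⁻¹(f A)| ≤ ∑ᵢ log₂ |Aᵢᵖ|`, and dividing by `n` gives the bound with `C = 4`.
-/

open Finset Real

theorem card_filter_length_eq_le_two_pow (T : Finset (List Bool)) (l : ℕ) :
    #{v ∈ T | v.length = l} ≤ 2 ^ l :=
  calc #{v ∈ T | v.length = l}
      ≤ #((univ : Finset (List.Vector Bool l)).image List.Vector.toList) :=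
        card_le_card fun v hv => by
          simp only [mem_filter] at hv
          simpa using ⟨⟨v, hv.2⟩, rfl⟩
    _ ≤ 2 ^ l := card_image_le.trans (by simp)

theorem sum_half_pow_two_mul_length_add_one_le_one (T : Finset (List Bool)) :
    ∑ v ∈ T, (1 / 2 : ℝ) ^ (2 * v.length + 1) ≤ 1 := by
  rw [sum_comp (fun l => (1 / 2 : ℝ) ^ (2 * l + 1)) List.length]
  calc ∑ l ∈ T.image List.length, #{v ∈ T | v.length = l} • (1 / 2 : ℝ) ^ (2 * l + 1)
      ≤ ∑ l ∈ T.image List.length, (1 / 2 : ℝ) ^ l / 2 := by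
        refine sum_le_sum fun l _ => ?_
        calc #{v ∈ T | v.length = l} • (1 / 2 : ℝ) ^ (2 * l + 1)
            ≤ (2 : ℝ) ^ l * (1 / 2 : ℝ) ^ (2 * l + 1) := by
              rw [nsmul_eq_mul]
              gcongr
              exact_mod_cast card_filter_length_eq_le_two_pow T l
          _ = (1 / 2 : ℝ) ^ l / 2 := by
              rw [one_div_pow, one_div_pow]; field_simp; ring
    _ ≤ ∑' l, (1 / 2 : ℝ) ^ l / 2 :=
        (summable_geometric_two.div_const 2).sum_le_tsum _ fun _ _ => by positivity
    _ = 1 := by rw [tsum_div_const, tsum_geometric_two]; norm_num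

theorem card_mul_log_card_le_sum_neg_log {ι : Type*} [Fintype ι] {q : ι → ℝ}
    (hq : ∀ i, 0 < q i) (hsum : ∑ i, q i ≤ 1) :
    Fintype.card ι * log (Fintype.card ι) ≤ ∑ i, -log (q i) := by
  rcases isEmpty_or_nonempty ι with _ | _
  · simp
  set N : ℝ := ((Fintype.card ι : ℕ) : ℝ)
  have hN : 0 < N := by positivity
  have key : ∑ i, (log N + log (q i)) ≤ ∑ i, (N * q i - 1) := sum_le_sum fun i _ => by
    rw [← log_mul hN.ne' (hq i).ne']
    exact log_le_sub_one_of_pos (mul_pos hN (hq i))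
  simp only [sum_add_distrib, sum_sub_distrib, sum_const, card_univ, nsmul_eq_mul, ← mul_sum,
    sum_neg_distrib, mul_one] at key ⊢
  nlinarith

theorem sum_div_card_fiber_eq_sum_image {α β : Type*} [Fintype α] [DecidableEq β] (f : α → β)
    (w : β → ℝ) :
    ∑ a, w (f a) / #{b | f b = f a} = ∑ v ∈ univ.image f, w v := by
  rw [sum_comp (fun v => w v / #{b | f b = v}) f]
  refine sum_congr rfl fun v hv => ?_
  obtain ⟨a, -, rfl⟩ := mem_image.mp hv
  have : (#{b | f b = f a} : ℝ) ≠ 0 := Nat.cast_ne_zero.mpr (card_ne_zero.mpr ⟨a, by simp⟩)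
  rw [nsmul_eq_mul, mul_div_cancel₀ _ this]

theorem card_mul_logb_card_le_sum_length_add_logb_card_fiber {α : Type*} [Fintype α]
    (f : α → List Bool) :
    Fintype.card α * logb 2 (Fintype.card α) ≤
      ∑ a, (2 * (f a).length + 1 + logb 2 #{b | f b = f a}) := by
  set k : α → ℝ := fun a => #{b | f b = f a}
  have hk : ∀ a, 0 < k a := fun a => Nat.cast_pos.mpr (card_pos.mpr ⟨a, by simp⟩)
  set q : α → ℝ := fun a => (1 / 2 : ℝ) ^ (2 * (f a).length + 1) / k a
  have hq : ∀ a, 0 < q a := fun a => div_pos (by positivity) (hk a)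
  have hsum : ∑ a, q a ≤ 1 := (sum_div_card_fiber_eq_sum_image f _).trans_le
    (sum_half_pow_two_mul_length_add_one_le_one _)
  have hlog : ∀ a, -log (q a) / log 2 = 2 * (f a).length + 1 + logb 2 (k a) := fun a => by
    rw [log_div (by positivity) (hk a).ne', log_pow, one_div, log_inv, logb]
    field_simp
    push_cast
    ring
  calc Fintype.card α * logb 2 (Fintype.card α)
      = Fintype.card α * log (Fintype.card α) / log 2 := by rw [logb, mul_div_assoc]
    _ ≤ (∑ a, -log (q a)) / log 2 := by
        gcongr
        exact card_mul_log_card_le_sum_neg_log hq hsum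
    _ = _ := by rw [sum_div]; exact sum_congr rfl fun a _ => hlog a

section PlausibleSet

variable {ι β : Type*} {α : ι → Type*}

def plausibleSet (f : (∀ i, α i) → β) (A : ∀ i, α i) (i : ι) : Set (α i) :=
  {a | ∃ A' : ∀ i, α i, A' i = a ∧ f A' = f A}

theorem card_fiber_le_prod_ncard_plausibleSet [Fintype ι] [DecidableEq ι] [∀ i, Fintype (α i)]
    [DecidableEq β] (f : (∀ i, α i) → β) (A : ∀ i, α i) :
    #{B | f B = f A} ≤ ∏ i, (plausibleSet f A i).ncard := by
  classical
  calc #{B | f B = f A}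
      ≤ #(Fintype.piFinset fun i => (plausibleSet f A i).toFinset) :=
        card_le_card fun B hB => by
          simp only [mem_filter, mem_univ, true_and] at hB
          simp only [Fintype.mem_piFinset, Set.mem_toFinset]
          exact fun i => ⟨B, rfl, hB⟩
    _ = ∏ i, (plausibleSet f A i).ncard := by
        simp [Fintype.card_piFinset, Set.ncard_eq_toFinset_card']

theorem logb_card_fiber_le_sum_logb_ncard_plausibleSet [Fintype ι] [DecidableEq ι]
    [∀ i, Fintype (α i)] [DecidableEq β] (f : (∀ i, α i) → β) (A : ∀ i, α i) :
    logb 2 #{B | f B = f A} ≤ ∑ i, logb 2 (plausibleSet f A i).ncard := by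
  have hpos : ∀ i, 0 < ((plausibleSet f A i).ncard : ℝ) := fun i =>
    Nat.cast_pos.mpr ((Set.ncard_pos (Set.toFinite _)).mpr ⟨A i, A, rfl, rfl⟩)
  rw [← logb_prod _ _ fun i _ => (hpos i).ne']
  exact logb_le_logb_of_le one_lt_two (Nat.cast_pos.mpr (card_pos.mpr ⟨A, by simp⟩))
    (by exact_mod_cast card_fiber_le_prod_ncard_plausibleSet f A)

end PlausibleSet

/-- The plausible-set lemma: if `A` is uniform on `U₁ × ⋯ × Uₙ` (each `|Uᵢ| = m`) and
`f` is a deterministic encoding with `E[|f(A)|] ≤ 2S`, then with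
`Aᵢᵖ = {a ∈ Uᵢ : ∃ A', A'ᵢ = a ∧ f(A') = f(A)}` we have
`E_{i,A}[log₂|Aᵢᵖ|] ≥ log₂ m - O(S/n + 1)`. -/
theorem plausible_sets_lemma :
    ∃ C : ℝ, 0 < C ∧ ∀ (n m : ℕ), 1 ≤ n → 1 ≤ m → ∀ S : ℝ, 0 ≤ S →
      ∀ f : (Fin n → Fin m) → List Bool,
        (∑ A : Fin n → Fin m, ((f A).length : ℝ)) / ((m : ℝ) ^ n) ≤ 2 * S →
        Real.logb 2 m - C * (S / n + 1) ≤
          (∑ i : Fin n, ∑ A : Fin n → Fin m,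
              Real.logb 2
                (({a : Fin m | ∃ A' : Fin n → Fin m, A' i = a ∧ f A' = f A}.ncard : ℕ) : ℝ))
            / ((n : ℝ) * (m : ℝ) ^ n) := by
  refine ⟨4, by norm_num, fun n m hn hm S hS f hf => ?_⟩
  set N : ℝ := (m : ℝ) ^ n
  have hN : 0 < N := by positivity
  have hn' : (1 : ℝ) ≤ n := by exact_mod_cast hn
  have hlength : ∑ A, ((f A).length : ℝ) ≤ 2 * S * N := by rwa [div_le_iff₀ hN] at hf
  have hcoding := card_mul_logb_card_le_sum_length_add_logb_card_fiber f
  simp only [sum_add_distrib, ← mul_sum, sum_const, card_univ, Fintype.card_fun,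
    Fintype.card_fin, nsmul_eq_mul, mul_one, Nat.cast_pow, logb_pow] at hcoding
  have hfiber : ∑ A, logb 2 #{B | f B = f A} ≤ ∑ i, ∑ A, logb 2 (plausibleSet f A i).ncard := by
    rw [sum_comm]
    exact sum_le_sum fun A _ => logb_card_fiber_le_sum_logb_ncard_plausibleSet f A
  rw [le_div_iff₀ (by positivity)]
  calc (logb 2 m - 4 * (S / n + 1)) * (n * N) = N * (n * logb 2 m) - 4 * S * N - 4 * n * N := by
        field_simp; ring
    _ ≤ N * (n * logb 2 m) - 2 * ∑ A, ((f A).length : ℝ) - N := by nlinarith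
    _ ≤ ∑ A, logb 2 #{B | f B = f A} := by linarith
    _ ≤ ∑ i, ∑ A, logb 2 (plausibleSet f A i).ncard := hfiber
end
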